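/- In the setting of Theorem 'unwind' (A odd, A ≡ 2 (mod 3), A = 3^n(w+1) - 1 where w = v_{0,n} ≢ 2 (mod 3)): the i-th odd term of the reverse Collatz sequence of A is v_{i,0} = 3^{n-i}·2^i·(w+1) - 1 for i = 0, 1, ..., n. In particular v_{n,0} = 2^n(w+1) - 1. -/
import Mathlib


/-- Unwind theorem, reverse Collatz column: if A is odd, A ≡ 2 (mod 3),
A = 3^n(w+1) - 1 with w odd and w ≢ 2 (mod 3), then the reverse Collatz
iterates r_0 = A, r_{i+1} = (2r_i - 1)/3 (whenever r_i ≡ 2 mod 3) satisfy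
r_i = 3^{n-i}·2^i·(w+1) - 1 for i ≤ n; in particular r_n = 2^n(w+1) - 1. -/
theorem stmt_17 (A n w : ℕ) (hA : Odd A) (h3 : A % 3 = 2)
    (hw : Odd w) (hw3 : w % 3 ≠ 2) (hAw : A = 3 ^ n * (w + 1) - 1)
    (r : ℕ → ℕ) (hr0 : r 0 = A)
    (hrec : ∀ i, r i % 3 = 2 → r (i + 1) = (2 * r i - 1) / 3) :
    (∀ i ≤ n, r i = 3 ^ (n - i) * 2 ^ i * (w + 1) - 1) ∧
    r n = 2 ^ n * (w + 1) - 1 := by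
  have key : ∀ i ≤ n, r i = 3 ^ (n - i) * 2 ^ i * (w + 1) - 1 := by
    intro i
    induction i with
    | zero => intro _; simpa [hr0] using hAw
    | succ i ih =>
      intro hle
      have hin : i < n := Nat.lt_of_succ_le hle
      have hri := ih (le_of_lt hin)
      have hk : n - i = (n - (i + 1)) + 1 := by omega
      set k := n - (i + 1)
      have hM : 3 ^ (n - i) * 2 ^ i * (w + 1) = 3 * (3 ^ k * 2 ^ i * (w + 1)) := by
        rw [hk]; ring
      have h1 : 0 < 3 ^ k * 2 ^ i * (w + 1) := by positivity
      have hmod : r i % 3 = 2 := by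
        rw [hri, hM]; omega
      rw [hrec i hmod, hri, hM]
      have h2 : 3 ^ k * 2 ^ (i + 1) * (w + 1) = 2 * (3 ^ k * 2 ^ i * (w + 1)) := by ring
      omega
  exact ⟨key, by simpa using key n le_rfl⟩
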